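/- For every embedded subset (A,P) ∈ ℰ^N, the Möbius function from the bottom element is given explicitly by μ_{ℰ^N}((∅,P_⊥),(A,P)) = (−1)^{|A|}·|A|! · ∏_{B ∈ P^{A^c}} (−1)^{|B|−1}(|B|−1)!, where P^{A^c} is the partition of A^c = N∖A induced by P (for A = ∅ the factor (−1)^{|A|}|A|! equals 1 and the product runs over all blocks of P). -/

import Mathlib

open scoped BigOperators

/-- `modp n A` is the modular partition `P^A_⊥` of `Fin n` whose unique (possibly)
non-singleton block is `A`, all other blocks being singletons. -/
def modp (n : ℕ) (A : Set (Fin n)) : Setoid (Fin n) where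
  r x y := x = y ∨ (x ∈ A ∧ y ∈ A)
  iseqv := by
    refine ⟨fun _ => Or.inl rfl, ?_, ?_⟩
    · rintro x y (rfl | ⟨hx, hy⟩)
      · exact Or.inl rfl
      · exact Or.inr ⟨hy, hx⟩
    · rintro x y z (rfl | ⟨hx, hy⟩) h
      · exact h
      · rcases h with rfl | ⟨hy', hz⟩
        · exact Or.inr ⟨hx, hy⟩
        · exact Or.inr ⟨hx, hz⟩

/-- The product `X^N = 2^N × 𝒫^N` of the subset lattice and the partition lattice,
ordered componentwise. -/
abbrev XN (n : ℕ) := Set (Fin n) × Setoid (Fin n)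

/-- The closure operator `cl` on `X^N`:  `cl(∅,P) = (∅,P)` and, for `A ≠ ∅`,
`cl(A,P) = (Ā, P ⊔ P^A_⊥)` where `Ā` is the block of `P ⊔ P^A_⊥` containing `A`. -/
def EmbClosure (n : ℕ) (x : XN n) : XN n :=
  ({y | ∃ a ∈ x.1, (x.2 ⊔ modp n x.1) y a}, x.2 ⊔ modp n x.1)

/-- An embedded subset is a pair that coincides with its closure. -/
def IsEmbedded (n : ℕ) (x : XN n) : Prop := EmbClosure n x = x

/-- The lattice `ℰ^N` of embedded subsets, with the induced order. -/
abbrev Emb (n : ℕ) := {x : XN n // IsEmbedded n x}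

lemma modp_le_of_subsingleton {n : ℕ} {A : Set (Fin n)} (h : A.Subsingleton)
    (Q : Setoid (Fin n)) : modp n A ≤ Q := by
  rw [Setoid.le_def]
  intro x y hxy
  rcases hxy with rfl | ⟨hx, hy⟩
  · exact Q.refl' x
  · obtain rfl := h hx hy
    exact Q.refl' x

lemma modp_eq_bot_of_subsingleton {n : ℕ} {A : Set (Fin n)} (h : A.Subsingleton) :
    modp n A = ⊥ :=
  le_antisymm (modp_le_of_subsingleton h ⊥) bot_le

lemma embedded_empty (n : ℕ) (Q : Setoid (Fin n)) : IsEmbedded n (∅, Q) := by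
  unfold IsEmbedded EmbClosure
  refine Prod.ext ?_ ?_
  · simp
  · simpa using sup_eq_left.mpr (modp_le_of_subsingleton Set.subsingleton_empty Q)

lemma embedded_univ_top (n : ℕ) : IsEmbedded n (Set.univ, ⊤) := by
  unfold IsEmbedded EmbClosure
  refine Prod.ext ?_ ?_
  · ext y
    simp only [Set.mem_setOf_eq, Set.mem_univ, iff_true]
    exact ⟨y, trivial, Setoid.refl' _ y⟩
  · exact sup_eq_left.mpr le_top

lemma embedded_singleton (n : ℕ) (i : Fin n) : IsEmbedded n ({i}, ⊥) := by
  have hb : modp n ({i} : Set (Fin n)) = ⊥ :=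
    modp_eq_bot_of_subsingleton Set.subsingleton_singleton
  unfold IsEmbedded EmbClosure
  refine Prod.ext ?_ ?_
  · ext y
    simp only [Set.mem_setOf_eq, hb, sup_idem, Set.mem_singleton_iff]
    constructor
    · rintro ⟨a, ha, hrel⟩
      subst ha
      change (⊥ ⊔ modp n {a}) y a at hrel
      rw [hb, sup_idem] at hrel
      simpa [Setoid.bot_def] using hrel
    · rintro rfl
      exact ⟨y, rfl, Setoid.refl' _ y⟩
  · simp [hb]

/-- The bottom element `(∅, P_⊥)` of `ℰ^N`. -/
def botE (n : ℕ) : Emb n := ⟨(∅, ⊥), embedded_empty n ⊥⟩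

/-- The top element `(N, P^⊤)` of `ℰ^N`. -/
def topE (n : ℕ) : Emb n := ⟨(Set.univ, ⊤), embedded_univ_top n⟩

/-- The atom `({i}, P_⊥)` of `ℰ^N`. -/
def atomS (n : ℕ) (i : Fin n) : Emb n := ⟨({i}, ⊥), embedded_singleton n i⟩

/-- The atom `(∅, [ij])` of `ℰ^N`, where `[ij]` is the atom of the partition lattice
whose unique non-singleton block is the pair `{i, j}`. -/
def atomP (n : ℕ) (i j : Fin n) : Emb n := ⟨(∅, modp n {i, j}), embedded_empty n _⟩

/-- A pair is an atom candidate: of the form `({i},P_⊥)` or `(∅,[ij])` with `i ≠ j`. -/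
def IsAtomPair (n : ℕ) (a : XN n) : Prop :=
  (∃ i : Fin n, a = ({i}, ⊥)) ∨ ∃ i j : Fin n, i ≠ j ∧ a = (∅, modp n {i, j})

/-- The number of blocks `|P|` of a partition. -/
noncomputable def numBlocks {α : Type*} (P : Setoid α) : ℕ := P.classes.ncard

/-- The rank function `r(A,P) = (n − |P|) + min{|A|,1}` of `ℰ^N`. -/
noncomputable def erank (n : ℕ) (x : XN n) : ℕ := (n - numBlocks x.2) + min x.1.ncard 1

/-- The partition `Q^S` of `S` induced by a partition `Q` of `N`. -/
def indPart {n : ℕ} (S : Set (Fin n)) (Q : Setoid (Fin n)) : Setoid S :=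
  Setoid.comap Subtype.val Q

/-- `mu` is the Möbius function of the (finite) poset `α`. -/
def IsMobius {α : Type*} [PartialOrder α] (mu : α → α → ℤ) : Prop :=
  (∀ x, mu x x = 1) ∧
  (∀ x y, ¬x ≤ y → mu x y = 0) ∧
  (∀ x y, x < y → mu x y = -∑ᶠ z ∈ Set.Ico x y, mu x z)

/-! Adjoining a new point (`none`) to the block `A` turns an embedded subset `(A, P)` into a
partition of `Option N`, and this is an order isomorphism `ℰ^N ≃o 𝒫^(Option N)` sending
`(∅, P_⊥)` to `⊥`. So `μ((∅, P_⊥), (A, P))` is `μ(⊥, ·)` in a partition lattice, evaluated at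
the partition with blocks `A ∪ {none}` and the blocks of `P^{Aᶜ}`.

In a partition lattice `μ(⊥, Q) = ∏_{C ∈ Q} (-1)^(|C|-1) (|C|-1)!`: it suffices that these
values sum to `0` over `Iic P` for `P ≠ ⊥`. By induction on the ground set, split a partition
`R ≤ P` of `Option α` into its restriction `Q` to `α` and the block `D` of `none` (empty or a
block of `Q` inside the block `T` of `none` in `P`). Adjoining `none` multiplies `μ(⊥, Q)` by `1`
if `D = ∅` and by `-|D|` otherwise, so the fibre over `Q` contributes `μ(⊥, Q) (1 - |T|)`.
-/

def blockMobius (k : ℕ) : ℤ := (-1) ^ (k - 1) * (Nat.factorial (k - 1) : ℤ)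

lemma blockMobius_one : blockMobius 1 = 1 := by simp [blockMobius]

lemma blockMobius_succ {k : ℕ} (hk : k ≠ 0) : blockMobius (k + 1) = -(k : ℤ) * blockMobius k := by
  obtain ⟨j, rfl⟩ := Nat.exists_eq_succ_of_ne_zero hk
  simp only [blockMobius, Nat.succ_sub_one, Nat.factorial_succ, pow_succ]
  push_cast
  ring

namespace Setoid

variable {α β : Type*}

instance finite [Finite α] : Finite (Setoid α) :=
  Finite.of_injective classes fun _ _ => classes_inj.2

noncomputable def mobiusFromBot (Q : Setoid α) : ℤ := ∏ᶠ C ∈ Q.classes, blockMobius C.ncard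

lemma setOf_rel_eq_setOf_rel_iff (Q : Setoid α) {x y : α} :
    {z | Q z x} = {z | Q z y} ↔ Q x y :=
  ⟨fun h => (h ▸ Q.refl' x : x ∈ {z | Q z y}), fun h => Set.ext fun _ => ⟨(Q.trans' · h),
    (Q.trans' · (Q.symm' h))⟩⟩

lemma ncard_eq_one_of_mem_classes_bot {C : Set α} (hC : C ∈ (⊥ : Setoid α).classes) :
    C.ncard = 1 := by
  obtain ⟨y, rfl⟩ := hC
  exact Set.ncard_eq_one.2 ⟨y, Set.ext fun _ => Iff.rfl⟩

@[simp] lemma mobiusFromBot_bot : (⊥ : Setoid α).mobiusFromBot = 1 :=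
  finprod_mem_eq_one_of_forall_eq_one fun _ hC => by
    rw [ncard_eq_one_of_mem_classes_bot hC, blockMobius_one]

def comapOrderIso (e : α ≃ β) : Setoid β ≃o Setoid α where
  toFun := comap e
  invFun := comap e.symm
  left_inv Q := Setoid.ext fun _ _ => by simp [comap_rel]
  right_inv Q := Setoid.ext fun _ _ => by simp [comap_rel]
  map_rel_iff' {Q R} := by
    simp only [Equiv.coe_fn_mk, le_def, comap_rel]
    exact ⟨fun h x y hxy => by simpa using @h (e.symm x) (e.symm y) (by simpa using hxy),
      fun h _ _ hxy => h hxy⟩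

lemma classes_comap_equiv (e : α ≃ β) (Q : Setoid β) :
    (Q.comap e).classes = Set.preimage e '' Q.classes := by
  ext s
  constructor
  · rintro ⟨y, rfl⟩
    exact ⟨_, Q.mem_classes (e y), rfl⟩
  · rintro ⟨C, ⟨w, rfl⟩, rfl⟩
    exact ⟨e.symm w, by ext; simp [comap_rel]⟩

lemma mobiusFromBot_comap_equiv (e : α ≃ β) (Q : Setoid β) :
    (Q.comap e).mobiusFromBot = Q.mobiusFromBot := by
  rw [mobiusFromBot, classes_comap_equiv,
    finprod_mem_image (Set.preimage_injective.2 e.surjective).injOn]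
  refine finprod_mem_congr rfl fun C _ => ?_
  rw [Set.ncard_preimage_of_injective_subset_range e.injective (by simp)]

def noneBlock (R : Setoid (Option α)) : Set α := {x | R (some x) none}

lemma noneBlock_eq_empty_or_mem_classes (R : Setoid (Option α)) :
    R.noneBlock = ∅ ∨ R.noneBlock ∈ (R.comap some).classes := by
  rcases R.noneBlock.eq_empty_or_nonempty with h | ⟨w, hw⟩
  · exact Or.inl h
  · exact Or.inr ⟨w, Set.ext fun _ => ⟨(R.trans' · (R.symm' hw)), (R.trans' · hw)⟩⟩

lemma ext_option {R S : Setoid (Option α)} (h₁ : R.comap some = S.comap some)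
    (h₂ : R.noneBlock = S.noneBlock) : R = S := by
  have hsome (x y : α) : R (some x) (some y) ↔ S (some x) (some y) := Setoid.ext_iff.1 h₁ x y
  have hnone (x : α) : R (some x) none ↔ S (some x) none := Set.ext_iff.1 h₂ x
  refine Setoid.ext fun a b => ?_
  rcases a with _ | x <;> rcases b with _ | y
  · exact iff_of_true (R.refl' _) (S.refl' _)
  · exact ⟨fun h => S.symm' ((hnone y).1 (R.symm' h)), fun h => R.symm' ((hnone y).2 (S.symm' h))⟩
  · exact hnone x
  · exact hsome x y

lemma le_iff_option {R S : Setoid (Option α)} :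
    R ≤ S ↔ R.comap some ≤ S.comap some ∧ R.noneBlock ⊆ S.noneBlock := by
  refine ⟨fun h => ⟨fun _ _ hxy => h hxy, fun _ hx => h hx⟩, fun ⟨h₁, h₂⟩ a b hab => ?_⟩
  rcases a with _ | x <;> rcases b with _ | y
  · exact S.refl' _
  · exact S.symm' (h₂ (R.symm' hab))
  · exact h₂ hab
  · exact h₁ hab

lemma eq_bot_iff_option {R : Setoid (Option α)} :
    R = ⊥ ↔ R.comap some = ⊥ ∧ R.noneBlock = ∅ := by
  refine ⟨?_, fun ⟨h₁, h₂⟩ => ext_option (h₁.trans ?_) (h₂.trans ?_)⟩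
  · rintro rfl
    exact ⟨Setoid.ext fun _ _ => Option.some_inj, Set.eq_empty_of_forall_notMem fun _ h =>
      Option.some_ne_none _ h⟩
  · exact Setoid.ext fun _ _ => Option.some_inj.symm
  · exact (Set.eq_empty_of_forall_notMem fun _ h => Option.some_ne_none _ h).symm

lemma image_val_classes_comap_compl {P : Setoid α} {A : Set α} (hA : A = ∅ ∨ A ∈ P.classes) :
    Set.image Subtype.val '' (P.comap (Subtype.val : ↥Aᶜ → α)).classes = P.classes \ {A} := by
  have hsat {w y : α} (hw : w ∉ A) (hyw : P y w) : y ∉ A := by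
    rcases hA with rfl | ⟨a, rfl⟩
    exacts [id, fun hy => hw (P.trans' (P.symm' hyw) hy)]
  have himage {w : α} (hw : w ∉ A) :
      Subtype.val '' {v : ↥Aᶜ | P v w} = {y | P y w} :=
    Set.ext fun y => ⟨fun ⟨_, hv, hvy⟩ => hvy ▸ hv, fun hy => ⟨⟨y, hsat hw hy⟩, hy, rfl⟩⟩
  ext C
  constructor
  · rintro ⟨_, ⟨⟨w, hw⟩, rfl⟩, rfl⟩
    change Subtype.val '' {v : ↥Aᶜ | P v w} ∈ _
    rw [himage hw]
    exact ⟨P.mem_classes w, fun h => hw ((Set.mem_singleton_iff.1 h) ▸ P.refl' w)⟩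
  · rintro ⟨⟨w, rfl⟩, hne⟩
    have hw : w ∉ A := fun hw => hne <| by
      rcases hA with rfl | ⟨a, rfl⟩
      exacts [absurd hw id, P.setOf_rel_eq_setOf_rel_iff.2 hw]
    exact ⟨_, ⟨⟨w, hw⟩, rfl⟩, himage hw⟩

/-- `none` joins the block `D` of `Q`, or forms a singleton when `D = ∅`. -/
def extendNone (Q : Setoid α) (D : Set α) : Setoid (Option α) :=
  ker (Option.elim' D fun x => {y | Q y x})

lemma comap_some_extendNone (Q : Setoid α) (D : Set α) : (Q.extendNone D).comap some = Q :=
  Setoid.ext fun _ _ => Q.setOf_rel_eq_setOf_rel_iff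

lemma noneBlock_extendNone {Q : Setoid α} {D : Set α} (hD : D = ∅ ∨ D ∈ Q.classes) :
    (Q.extendNone D).noneBlock = D := by
  ext x
  change {y | Q y x} = D ↔ x ∈ D
  rcases hD with rfl | ⟨w, rfl⟩
  · exact iff_of_false (Set.nonempty_iff_ne_empty.1 ⟨x, Q.refl' x⟩) id
  · exact Q.setOf_rel_eq_setOf_rel_iff

lemma classes_option (R : Setoid (Option α)) :
    R.classes = insert (insert none (some '' R.noneBlock))
      (Set.image some '' ((R.comap some).classes \ {R.noneBlock})) := by
  have hnone : {a | R a none} = insert none (some '' R.noneBlock) := by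
    ext (_ | x) <;> simp [noneBlock]
  have hsome (w : α) (hw : w ∉ R.noneBlock) :
      {a | R a (some w)} = some '' {x | R (some x) (some w)} := by
    ext (_ | x)
    · exact iff_of_false (fun h => hw (R.symm' h)) (by simp)
    · simp
  have hne (w : α) (hw : w ∉ R.noneBlock) : {x | R (some x) (some w)} ≠ R.noneBlock :=
    fun h => hw (h ▸ R.refl' (some w))
  ext s
  constructor
  · rintro ⟨_ | w, rfl⟩
    · exact Or.inl hnone
    by_cases hw : w ∈ R.noneBlock
    · exact Or.inl (((R.setOf_rel_eq_setOf_rel_iff).2 hw).trans hnone)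
    · exact Or.inr ⟨_, ⟨⟨w, rfl⟩, hne w hw⟩, (hsome w hw).symm⟩
  · rintro (rfl | ⟨C, ⟨⟨w, rfl⟩, hC⟩, rfl⟩)
    · exact ⟨none, hnone.symm⟩
    · have hw : w ∉ R.noneBlock := fun hw =>
        hC (Set.ext fun _ => ⟨(R.trans' · hw), (R.trans' · (R.symm' hw))⟩)
      exact ⟨some w, (hsome w hw).symm⟩

section Finite

variable [Finite α]

lemma mobiusFromBot_eq_mul_diff {Q : Setoid α} {C : Set α} (hC : C ∈ Q.classes) :
    Q.mobiusFromBot = blockMobius C.ncard * ∏ᶠ C' ∈ Q.classes \ {C}, blockMobius C'.ncard := by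
  rw [mobiusFromBot, ← finprod_mem_mul_sdiff (Set.singleton_subset_iff.2 hC) (Set.toFinite _),
    finprod_mem_singleton]

lemma mobiusFromBot_option (R : Setoid (Option α)) :
    R.mobiusFromBot = blockMobius (R.noneBlock.ncard + 1) *
      ∏ᶠ C ∈ (R.comap some).classes \ {R.noneBlock}, blockMobius C.ncard := by
  have hnotMem : insert none (some '' R.noneBlock) ∉
      Set.image some '' ((R.comap some).classes \ {R.noneBlock}) := by
    rintro ⟨C, -, hC⟩
    obtain ⟨x, -, hx⟩ : none ∈ some '' C := hC ▸ Set.mem_insert none _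
    exact Option.some_ne_none x hx
  rw [mobiusFromBot, classes_option, finprod_mem_insert _ hnotMem (Set.toFinite _),
    finprod_mem_image (Set.image_injective.2 (Option.some_injective α)).injOn,
    Set.ncard_insert_of_notMem (by simp) (Set.toFinite _),
    Set.ncard_image_of_injective _ (Option.some_injective α)]
  simp only [Set.ncard_image_of_injective _ (Option.some_injective α)]

lemma sum_ncard_classes_subset (Q : Setoid α) {T : Set α} (hT : ∀ x y, Q x y → x ∈ T → y ∈ T) :
    ∑ᶠ C ∈ {C ∈ Q.classes | C ⊆ T}, C.ncard = T.ncard := by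
  have hunion : ⋃ C ∈ {C ∈ Q.classes | C ⊆ T}, C = T := by
    refine Set.Subset.antisymm (Set.iUnion₂_subset fun C hC => hC.2) fun x hx => ?_
    exact Set.mem_biUnion ⟨Q.mem_classes x, fun y hy => hT x y (Q.symm' hy) hx⟩ (Q.refl' x)
  calc ∑ᶠ C ∈ {C ∈ Q.classes | C ⊆ T}, C.ncard = (⋃ C ∈ {C ∈ Q.classes | C ⊆ T}, C).ncard :=
        ((Set.toFinite _).ncard_biUnion (s := id) (fun _ _ => Set.toFinite _)
          ((isPartition_classes Q).pairwiseDisjoint.subset (Set.sep_subset _ _))).symm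
    _ = T.ncard := by rw [hunion]

lemma sum_mobiusFromBot_fiber (Q : Setoid α) {T : Set α} (hT : ∀ x y, Q x y → x ∈ T → y ∈ T) :
    ∑ᶠ R ∈ {R : Setoid (Option α) | R.comap some = Q ∧ R.noneBlock ⊆ T}, R.mobiusFromBot =
      Q.mobiusFromBot * (1 - T.ncard) := by
  set g : Set α → ℤ := fun D =>
    blockMobius (D.ncard + 1) * ∏ᶠ C ∈ Q.classes \ {D}, blockMobius C.ncard
  have hbij : Set.BijOn noneBlock {R : Setoid (Option α) | R.comap some = Q ∧ R.noneBlock ⊆ T}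
      (insert ∅ {C ∈ Q.classes | C ⊆ T}) := by
    refine ⟨fun R ⟨hR, hRT⟩ => ?_, fun R hR S hS h => ext_option (hR.1.trans hS.1.symm) h, ?_⟩
    · rcases R.noneBlock_eq_empty_or_mem_classes with h | h
      · exact Or.inl h
      · exact Or.inr ⟨hR ▸ h, hRT⟩
    · rintro D hD
      have hD' : D = ∅ ∨ D ∈ Q.classes := hD.imp id And.left
      refine ⟨Q.extendNone D, ⟨comap_some_extendNone Q D, ?_⟩, noneBlock_extendNone hD'⟩
      rw [noneBlock_extendNone hD']
      rcases hD with rfl | ⟨-, hDT⟩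
      exacts [Set.empty_subset T, hDT]
  have hclass : ∀ C ∈ {C ∈ Q.classes | C ⊆ T}, g C = -(C.ncard : ℤ) * Q.mobiusFromBot := by
    rintro C ⟨hC, -⟩
    have hne : C.ncard ≠ 0 := (Set.ncard_pos (Set.toFinite C)).2 (nonempty_of_mem_partition
      (isPartition_classes Q) hC) |>.ne'
    simp only [g]
    rw [blockMobius_succ hne, mobiusFromBot_eq_mul_diff hC, mul_assoc]
  rw [finsum_mem_eq_of_bijOn noneBlock hbij (g := g)
      fun R ⟨hR, _⟩ => by rw [mobiusFromBot_option, hR],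
    finsum_mem_insert _ (fun h => empty_notMem_classes h.1) (Set.toFinite _),
    finsum_mem_congr rfl hclass, ← finsum_mem_mul' _ _ (Set.toFinite _)]
  simp only [g, Set.ncard_empty, zero_add, blockMobius_one, one_mul,
    Set.sdiff_singleton_eq_self empty_notMem_classes]
  rw [finsum_mem_neg_distrib _ (Set.toFinite _), ← Nat.cast_finsum_mem (Set.toFinite _),
    sum_ncard_classes_subset Q hT, mobiusFromBot]
  ring

lemma sum_mobiusFromBot_Iic_option (P : Setoid (Option α)) :
    ∑ᶠ R ∈ Set.Iic P, R.mobiusFromBot =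
      (∑ᶠ Q ∈ Set.Iic (P.comap some), Q.mobiusFromBot) * (1 - P.noneBlock.ncard) := by
  have hdecomp : Set.Iic P = ⋃ Q ∈ Set.Iic (P.comap some),
      {R : Setoid (Option α) | R.comap some = Q ∧ R.noneBlock ⊆ P.noneBlock} := by
    ext R
    simp [le_iff_option]
  have hdisj : (Set.Iic (P.comap some)).PairwiseDisjoint
      fun Q => {R : Setoid (Option α) | R.comap some = Q ∧ R.noneBlock ⊆ P.noneBlock} :=
    fun _ _ _ _ hne => Set.disjoint_left.2 fun _ h h' => hne (h.1.symm.trans h'.1)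
  rw [hdecomp, finsum_mem_biUnion hdisj (Set.toFinite _) (fun _ _ => Set.toFinite _),
    finsum_mem_mul' _ _ (Set.toFinite _)]
  exact finsum_mem_congr rfl fun Q hQ =>
    sum_mobiusFromBot_fiber Q fun _ _ hxy hx => P.trans' (P.symm' (hQ hxy)) hx

open Classical in
theorem sum_mobiusFromBot_Iic (P : Setoid α) :
    ∑ᶠ Q ∈ Set.Iic P, Q.mobiusFromBot = if P = ⊥ then 1 else 0 := by
  induction α using Finite.induction_empty_option with
  | of_equiv e ih =>
    have h := ih (comapOrderIso e P)
    rw [← (comapOrderIso e).image_Iic, finsum_mem_image (comapOrderIso e).injective.injOn,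
      map_eq_bot_iff] at h
    exact (finsum_mem_congr rfl fun Q _ => (mobiusFromBot_comap_equiv e Q).symm).trans h
  | h_empty =>
    obtain rfl : P = ⊥ := Setoid.ext fun a => a.elim
    rw [if_pos rfl, Set.Iic_bot, finsum_mem_singleton, mobiusFromBot_bot]
  | @h_option α _ ih =>
    rw [sum_mobiusFromBot_Iic_option, ih]
    by_cases hQ : P.comap some = ⊥
    · rcases P.noneBlock_eq_empty_or_mem_classes with hT | hT
      · rw [if_pos hQ, if_pos (eq_bot_iff_option.2 ⟨hQ, hT⟩), hT, Set.ncard_empty]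
        norm_num
      · rw [hQ] at hT
        rw [if_pos hQ, if_neg fun h => empty_notMem_classes ((eq_bot_iff_option.1 h).2 ▸ hT),
          ncard_eq_one_of_mem_classes_bot hT]
        norm_num
    · rw [if_neg hQ, if_neg fun h => hQ (eq_bot_iff_option.1 h).1, zero_mul]

end Finite

end Setoid

theorem IsMobius.apply_eq_of_sum_Icc {α : Type*} [PartialOrder α] [Finite α]
    {mu : α → α → ℤ} (hmu : IsMobius mu) {a : α} {f : α → ℤ} (ha : f a = 1)
    (hf : ∀ x, a < x → ∑ᶠ z ∈ Set.Icc a x, f z = 0) {x : α} (hx : a ≤ x) : mu a x = f x := by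
  induction x using WellFoundedLT.induction with
  | _ x ih =>
  rcases hx.eq_or_lt with rfl | hlt
  · rw [hmu.1, ha]
  · have h := hf x hlt
    rw [← Set.Ico_insert_right hx, finsum_mem_insert _ (fun h => h.2.false) (Set.toFinite _)] at h
    rw [hmu.2.2 a x hlt, finsum_mem_congr rfl fun z hz => ih z hz.2 hz.1]
    linarith

lemma modp_le_iff {n : ℕ} {A : Set (Fin n)} {P : Setoid (Fin n)} :
    modp n A ≤ P ↔ ∀ x ∈ A, ∀ y ∈ A, P x y :=
  ⟨fun h _ hx _ hy => h (Or.inr ⟨hx, hy⟩),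
    fun h x _ hxy => hxy.elim (fun e => e ▸ P.refl' x) fun ⟨hx, hy⟩ => h x hx _ hy⟩

lemma isEmbedded_iff {n : ℕ} {A : Set (Fin n)} {P : Setoid (Fin n)} :
    IsEmbedded n (A, P) ↔ A = ∅ ∨ A ∈ P.classes := by
  constructor
  · intro h
    have hsup : P ⊔ modp n A = P := congrArg Prod.snd h
    have hset : {y | ∃ a ∈ A, (P ⊔ modp n A) y a} = A := congrArg Prod.fst h
    rw [hsup] at hset
    have hA := modp_le_iff.1 (sup_eq_left.1 hsup)
    rcases A.eq_empty_or_nonempty with hA0 | ⟨w, hw⟩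
    · exact Or.inl hA0
    · exact Or.inr ⟨w, Set.ext fun x => ⟨fun hx => hA x hx w hw, fun hx => hset ▸ ⟨w, hw, hx⟩⟩⟩
  · rintro (rfl | ⟨w, rfl⟩)
    · exact embedded_empty n P
    · have hsup : P ⊔ modp n {x | P x w} = P :=
        sup_eq_left.2 (modp_le_iff.2 fun x hx y hy => P.trans' hx (P.symm' hy))
      refine Prod.ext ?_ hsup
      change {y | ∃ a ∈ _, (P ⊔ modp n _) y a} = _
      rw [hsup]
      exact Set.ext fun y => ⟨fun ⟨a, ha, hya⟩ => P.trans' hya ha, fun hy => ⟨y, hy, P.refl' y⟩⟩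

open Setoid

def embOrderIso (n : ℕ) : Emb n ≃o Setoid (Option (Fin n)) where
  toFun z := z.1.2.extendNone z.1.1
  invFun R := ⟨(R.noneBlock, R.comap some), isEmbedded_iff.2 R.noneBlock_eq_empty_or_mem_classes⟩
  left_inv z := Subtype.ext <| Prod.ext (noneBlock_extendNone (isEmbedded_iff.1 z.2))
    (comap_some_extendNone _ _)
  right_inv R := ext_option (comap_some_extendNone _ _)
    (noneBlock_extendNone R.noneBlock_eq_empty_or_mem_classes)
  map_rel_iff' {z w} := by
    obtain ⟨⟨A, P⟩, hz⟩ := z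
    obtain ⟨⟨B, Q⟩, hw⟩ := w
    simp only [Equiv.coe_fn_mk, le_iff_option, comap_some_extendNone,
      noneBlock_extendNone (isEmbedded_iff.1 hz), noneBlock_extendNone (isEmbedded_iff.1 hw)]
    exact and_comm.trans Prod.mk_le_mk.symm

lemma embOrderIso_botE (n : ℕ) : embOrderIso n (botE n) = ⊥ :=
  eq_bot_iff_option.2 ⟨comap_some_extendNone _ _, noneBlock_extendNone (Or.inl rfl)⟩

lemma mobiusFromBot_embOrderIso {n : ℕ} {A : Set (Fin n)} {P : Setoid (Fin n)}
    (h : IsEmbedded n (A, P)) :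
    (embOrderIso n ⟨(A, P), h⟩).mobiusFromBot = (-1) ^ A.ncard * (Nat.factorial A.ncard : ℤ) *
      ∏ᶠ B ∈ (indPart Aᶜ P).classes, blockMobius B.ncard := by
  have hA := isEmbedded_iff.1 h
  change (P.extendNone A).mobiusFromBot = _
  rw [mobiusFromBot_option, noneBlock_extendNone hA, comap_some_extendNone,
    ← image_val_classes_comap_compl hA,
    finprod_mem_image (Set.image_injective.2 Subtype.val_injective).injOn]
  simp only [Set.ncard_image_of_injective _ Subtype.val_injective, blockMobius,
    Nat.add_sub_cancel]
  rfl

theorem mobius_from_bottom_general (n : ℕ) (A : Set (Fin n)) (P : Setoid (Fin n))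
    (h : IsEmbedded n (A, P)) (mu : Emb n → Emb n → ℤ) (hmu : IsMobius mu) :
    mu (botE n) ⟨(A, P), h⟩ =
      (-1) ^ A.ncard * (Nat.factorial A.ncard : ℤ) *
        ∏ᶠ B ∈ (indPart Aᶜ P).classes,
          (-1) ^ (B.ncard - 1) * (Nat.factorial (B.ncard - 1) : ℤ) := by
  have hbot := embOrderIso_botE n
  have hsum (x : Emb n) (hx : botE n < x) :
      ∑ᶠ z ∈ Set.Icc (botE n) x, (embOrderIso n z).mobiusFromBot = 0 := by
    rw [← finsum_mem_image (embOrderIso n).injective.injOn, OrderIso.image_Icc, hbot, Set.Icc_bot,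
      sum_mobiusFromBot_Iic, if_neg (hbot ▸ (embOrderIso n).injective.ne hx.ne')]
  have hle : botE n ≤ ⟨(A, P), h⟩ := Prod.mk_le_mk.2 ⟨Set.empty_subset A, bot_le⟩
  rw [hmu.apply_eq_of_sum_Icc (by rw [hbot, mobiusFromBot_bot]) hsum hle]
  exact mobiusFromBot_embOrderIso h

theorem mobius_from_bottom (n : ℕ) (hn : 1 ≤ n) (A : Set (Fin n)) (P : Setoid (Fin n))
    (h : IsEmbedded n (A, P)) (mu : Emb n → Emb n → ℤ) (hmu : IsMobius mu) :
    mu (botE n) ⟨(A, P), h⟩ =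
      (-1) ^ A.ncard * (Nat.factorial A.ncard : ℤ) *
        ∏ᶠ B ∈ (indPart Aᶜ P).classes,
          (-1) ^ (B.ncard - 1) * (Nat.factorial (B.ncard - 1) : ℤ) :=
  mobius_from_bottom_general n A P h mu hmu
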